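/- For every natural number n, P_n(x) = ∑_{k=0}^{n} binom(n,k) · b^{n−k} · Q̃_k(x) in ℝ[x]; that is, the Laurent biorthogonal polynomials P_n are the b-th binomial transform of the orthogonal polynomials Q̃_n. -/

import Mathlib

/-! With `E` the shift of sequences, the binomial transform `n ↦ ∑ₖ C(n,k) bⁿ⁻ᵏ u k` of `u` is
`n ↦ ((E + b)ⁿ u) 0`. If `E² = α E + β` on `u`, then `F = E + b` satisfies
`F² = (α + 2b) F + (β - α b - b²)`, a recurrence inherited by the transform. For `Q̃`, where
`α = x - 2b - c` and `β = -b(b + c)`, this is the recurrence of `P` (coefficients `x - c` and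
`-b x`), and the initial values agree. -/

open Polynomial Finset

section BinomialTransform

variable {R : Type*} [CommRing R]

def binomialTransform (b : R) (u : ℕ → R) (n : ℕ) : R :=
  ∑ k ∈ range (n + 1), n.choose k * (b ^ (n - k) * u k)

theorem binomialTransform_succ (b : R) (u : ℕ → R) (n : ℕ) :
    binomialTransform b u (n + 1) =
      b * binomialTransform b u n + binomialTransform b (fun k => u (k + 1)) n := by
  rw [binomialTransform, sum_choose_succ_mul (fun k j => b ^ j * u k), binomialTransform, mul_sum]
  congr 1
  refine sum_congr rfl fun k hk => ?_
  rw [Nat.sub_add_comm (mem_range_succ_iff.mp hk), pow_succ]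
  ring

theorem binomialTransform_linear_comb (b α β : R) (v w : ℕ → R) (n : ℕ) :
    binomialTransform b (fun k => α * v k + β * w k) n =
      α * binomialTransform b v n + β * binomialTransform b w n := by
  simp only [binomialTransform, mul_sum, ← sum_add_distrib]
  exact sum_congr rfl fun k _ => by ring

theorem binomialTransform_add_two (b α β : R) {u : ℕ → R}
    (hu : ∀ k, u (k + 2) = α * u (k + 1) + β * u k) (n : ℕ) :
    binomialTransform b u (n + 2) =
      (α + 2 * b) * binomialTransform b u (n + 1)
        + (β - α * b - b ^ 2) * binomialTransform b u n := by
  have hshift : (fun k => u (k + 2)) = fun k => α * u (k + 1) + β * u k := funext hu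
  rw [binomialTransform_succ b u (n + 1), binomialTransform_succ b (fun k => u (k + 1)) n, hshift,
    binomialTransform_linear_comb, binomialTransform_succ b u n]
  ring

theorem eq_of_two_step_recurrence (α β : R) {u v : ℕ → R}
    (hu : ∀ n, u (n + 2) = α * u (n + 1) + β * u n)
    (hv : ∀ n, v (n + 2) = α * v (n + 1) + β * v n) (h0 : u 0 = v 0) (h1 : u 1 = v 1) :
    u = v := by
  let E : LinearRecurrence R := ⟨2, ![β, α]⟩
  have hsol : ∀ w : ℕ → R, (∀ n, w (n + 2) = α * w (n + 1) + β * w n) → E.IsSolution w :=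
    fun w hw n => by simp [E, hw, Fin.sum_univ_two, add_comm]
  refine (E.eq_iff_eqOn_range_order u v (hsol u hu) (hsol v hv)).mpr fun n hn => ?_
  have hn2 : n < 2 := by simpa [E] using hn
  interval_cases n <;> assumption

end BinomialTransform

theorem lbp_binomial_transform_of_orth_tilde_general
    (b c : ℝ)
    (P : ℕ → Polynomial ℝ)
    (hP0 : P 0 = 1)
    (hP1 : P 1 = Polynomial.X - Polynomial.C c)
    (hP : ∀ n, 2 ≤ n →
      P n = (Polynomial.X - Polynomial.C c) * P (n - 1)
            - Polynomial.C b * Polynomial.X * P (n - 2))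
    (Qt : ℕ → Polynomial ℝ)
    (hQt0 : Qt 0 = 1)
    (hQt1 : Qt 1 = Polynomial.X - Polynomial.C (b + c))
    (hQt : ∀ n, 2 ≤ n →
      Qt n = (Polynomial.X - Polynomial.C (2 * b + c)) * Qt (n - 1)
             - Polynomial.C (b * (b + c)) * Qt (n - 2))
    (n : ℕ) :
    P n = ∑ k ∈ Finset.range (n + 1),
      Polynomial.C ((n.choose k : ℝ) * b ^ (n - k)) * Qt k := by
  have hPrec (m : ℕ) : P (m + 2) = (X - C c) * P (m + 1) + -(C b * X) * P m := by
    rw [hP (m + 2) le_add_self, Nat.add_sub_cancel, neg_mul, ← sub_eq_add_neg]; rfl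
  have hQrec (m : ℕ) :
      Qt (m + 2) = (X - C (2 * b + c)) * Qt (m + 1) + -C (b * (b + c)) * Qt m := by
    rw [hQt (m + 2) le_add_self, Nat.add_sub_cancel, neg_mul, ← sub_eq_add_neg]; rfl
  have hSrec (m : ℕ) : binomialTransform (C b) Qt (m + 2) =
      (X - C c) * binomialTransform (C b) Qt (m + 1)
        + -(C b * X) * binomialTransform (C b) Qt m := by
    rw [binomialTransform_add_two (C b) _ _ hQrec]
    simp only [map_add, map_mul, C_ofNat]
    ring
  have hPS : P = binomialTransform (C b) Qt := by
    refine eq_of_two_step_recurrence _ _ hPrec hSrec ?_ ?_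
    · simp [binomialTransform, hP0, hQt0]
    · have hS1 : binomialTransform (C b) Qt 1 = C b * Qt 0 + Qt 1 := by
        simp [binomialTransform, sum_range_succ]
      rw [hS1, hP1, hQt0, hQt1, C_add]
      ring
  simp [hPS, binomialTransform, mul_assoc]

/-- The Laurent biorthogonal polynomials are the `b`-th binomial transform of
the orthogonal polynomials `Q̃_n`: `P_n(x) = ∑_{k=0}^n C(n,k) b^{n-k} Q̃_k(x)`. -/
theorem lbp_binomial_transform_of_orth_tilde
    (b c : ℝ) (hb : b ≠ 0) (hc : c ≠ 0)
    (P : ℕ → Polynomial ℝ)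
    (hP0 : P 0 = 1)
    (hP1 : P 1 = Polynomial.X - Polynomial.C c)
    (hP : ∀ n, 2 ≤ n →
      P n = (Polynomial.X - Polynomial.C c) * P (n - 1)
            - Polynomial.C b * Polynomial.X * P (n - 2))
    (Qt : ℕ → Polynomial ℝ)
    (hQt0 : Qt 0 = 1)
    (hQt1 : Qt 1 = Polynomial.X - Polynomial.C (b + c))
    (hQt : ∀ n, 2 ≤ n →
      Qt n = (Polynomial.X - Polynomial.C (2 * b + c)) * Qt (n - 1)
             - Polynomial.C (b * (b + c)) * Qt (n - 2))
    (n : ℕ) :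
    P n = ∑ k ∈ Finset.range (n + 1),
      Polynomial.C ((n.choose k : ℝ) * b ^ (n - k)) * Qt k :=
  lbp_binomial_transform_of_orth_tilde_general b c P hP0 hP1 hP Qt hQt0 hQt1 hQt n
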